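/- For every digraph G on vertex set {1,…,n}, there exists a monotone Boolean network f : {0,1}^n → {0,1}^n whose interaction graph is G and which has at least ν(G)+1 fixed points. -/

import Mathlib

open Classical

section Defs

variable {V : Type*}

/-- `f_v` depends on input `u`. -/
def Depends (f : (V → Bool) → V → Bool) (u v : V) : Prop :=
  ∃ x y : V → Bool, (∀ w, w ≠ u → x w = y w) ∧ f x v ≠ f y v

/-- The arcs of a cycle given by the list of its vertices `v₀ … v_m`:
`(v₀,v₁), …, (v_m, v₀)`. -/
def CycArcs (l : List V) : List (V × V) :=
  (l ++ l.take 1).zip ((l ++ l.take 1).tail)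

/-- A (directed) cycle of the digraph `G`, given by its list of (distinct) vertices.
Loops (cycles of length one) are allowed. -/
def IsCycle (G : V → V → Prop) (l : List V) : Prop :=
  l ≠ [] ∧ l.Nodup ∧ ∀ a ∈ CycArcs l, G a.1 a.2

/-- The arcs of a path given by the list of its vertices. -/
def PathArcs (l : List V) : List (V × V) := l.zip l.tail

/-- A (directed) path of `G` with at least one arc, with distinct vertices except that
the first and last vertex may coincide. -/
def IsPath (G : V → V → Prop) (l : List V) : Prop :=
  2 ≤ l.length ∧ l.dropLast.Nodup ∧ l.tail.Nodup ∧ ∀ a ∈ PathArcs l, G a.1 a.2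

/-- A packing: a collection of pairwise vertex-disjoint cycles. -/
def IsPacking (G : V → V → Prop) (P : List (List V)) : Prop :=
  (∀ l ∈ P, IsCycle G l) ∧ P.Pairwise fun l₁ l₂ => ∀ v ∈ l₁, v ∉ l₂

/-- A feedback vertex set: a set of vertices meeting every cycle. -/
def IsFVS (G : V → V → Prop) (I : Finset V) : Prop :=
  ∀ l : List V, IsCycle G l → ∃ v ∈ l, v ∈ I

/-- `τ(G)`: minimum size of a feedback vertex set. -/
noncomputable def tau [Fintype V] (G : V → V → Prop) : ℕ :=
  sInf {k | ∃ I : Finset V, IsFVS G I ∧ I.card = k}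

/-- `ν(G)`: maximum number of pairwise vertex-disjoint cycles. -/
noncomputable def nu (G : V → V → Prop) : ℕ :=
  sSup {k | ∃ P : List (List V), IsPacking G P ∧ P.length = k}

/-- A source: a vertex of in-degree zero. -/
def IsSource (G : V → V → Prop) (v : V) : Prop := ∀ u, ¬ G u v

/-- A principal path w.r.t. a packing `P`: a path none of whose arcs and none of whose
internal vertices belong to a cycle of the packing. -/
def IsPrincipal (G : V → V → Prop) (P : List (List V)) (l : List V) : Prop :=
  IsPath G l ∧ (∀ a ∈ PathArcs l, ∀ C ∈ P, a ∉ CycArcs C) ∧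
    ∀ v ∈ l.tail.dropLast, ∀ C ∈ P, v ∉ C

/-- There is a principal path (w.r.t. packing `P`) from a vertex satisfying `A` to `v`. -/
def PrincipalFrom (G : V → V → Prop) (P : List (List V)) (A : V → Prop) (v : V) : Prop :=
  ∃ l : List V, IsPrincipal G P l ∧ (∃ u, l.head? = some u ∧ A u) ∧ l.getLast? = some v

/-- A special packing. -/
def IsSpecialPacking (G : V → V → Prop) (P : List (List V)) : Prop :=
  IsPacking G P ∧
    ∀ Ci ∈ P, ∀ v ∈ Ci,
      (∃ Cj ∈ P, Cj ≠ Ci ∧ PrincipalFrom G P (fun u => u ∈ Cj) v) →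
      (PrincipalFrom G P (fun u => u ∈ Ci) v ∨ PrincipalFrom G P (IsSource G) v)

/-- `ν*(G)`: maximum size of a special packing. -/
noncomputable def nuStar (G : V → V → Prop) : ℕ :=
  sSup {k | ∃ P : List (List V), IsSpecialPacking G P ∧ P.length = k}

/-- Two vertex-disjoint cycles are independent if there is no arc between them. -/
def Independent (G : V → V → Prop) (C₁ C₂ : List V) : Prop :=
  (∀ v ∈ C₁, v ∉ C₂) ∧ ∀ u ∈ C₁, ∀ v ∈ C₂, ¬ G u v ∧ ¬ G v u

/-- The arc `uv` is positive. -/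
def PosArc [DecidableEq V] (f : (V → Bool) → V → Bool) (u v : V) : Prop :=
  ∀ x : V → Bool, x u = false → f x v ≤ f (Function.update x u true) v

/-- The arc `uv` is negative. -/
def NegArc [DecidableEq V] (f : (V → Bool) → V → Bool) (u v : V) : Prop :=
  ∀ x : V → Bool, x u = false → f (Function.update x u true) v ≤ f x v

/-- The sign of the arc `uv` in the signed interaction graph of `f`. -/
noncomputable def arcSign [DecidableEq V] (f : (V → Bool) → V → Bool) (u v : V) : ℤ :=
  if PosArc f u v then 1 else if NegArc f u v then -1 else 0

/-- The sign of a cycle: product of the signs of its arcs. -/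
def CycleSign (σ : V → V → ℤ) (l : List V) : ℤ :=
  ((CycArcs l).map fun a => σ a.1 a.2).prod

/-- `ν⁺(G,σ)`: maximum number of pairwise vertex-disjoint non-negative cycles. -/
noncomputable def nuPlus (G : V → V → Prop) (σ : V → V → ℤ) : ℕ :=
  sSup {k | ∃ P : List (List V),
    IsPacking G P ∧ (∀ C ∈ P, 0 ≤ CycleSign σ C) ∧ P.length = k}

/-- A monotone feedback vertex set of `(G,σ)`. -/
def IsMonFVS (G : V → V → Prop) (σ : V → V → ℤ) (J : Finset V) : Prop :=
  IsFVS G J ∧ ∀ u v, G u v → σ u v ≠ 1 → v ∈ J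

/-- `τ_m(G,σ)`: minimum size of a monotone feedback vertex set. -/
noncomputable def tauM [Fintype V] (G : V → V → Prop) (σ : V → V → ℤ) : ℕ :=
  sInf {k | ∃ J : Finset V, IsMonFVS G σ J ∧ J.card = k}

/-- The `I`-switch of the arc-labelling `σ`. -/
noncomputable def switchSign (σ : V → V → ℤ) (I : Finset V) (u v : V) : ℤ :=
  if ((u ∈ I) ↔ (v ∈ I)) then σ u v else -σ u v

/-- `τ*_m(G,σ)`: minimum of `τ_m` over all switches of `(G,σ)`. -/
noncomputable def tauMStar [Fintype V] (G : V → V → Prop) (σ : V → V → ℤ) : ℕ :=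
  sInf {k | ∃ I : Finset V, tauM G (switchSign σ I) = k}

end Defs

section Patterns

variable {m : Type*}

/-- A `k`-pattern in `P ⊆ {0,1}^m`. -/
def IsPattern (P : Set (m → Bool)) (k : ℕ) (X Y : Fin k → m → Bool) : Prop :=
  Function.Injective X ∧ Function.Injective Y ∧
    (∀ p, X p ∈ P) ∧ (∀ p, Y p ∈ P) ∧ ∀ p q, X p ≤ Y q ↔ p ≠ q

/-- `P` has a `k`-pattern. -/
def HasPattern (P : Set (m → Bool)) (k : ℕ) : Prop :=
  ∃ X Y, IsPattern P k X Y

/-- `P` has a special `k`-pattern: a `k`-pattern with `y^p = complement of x^p`. -/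
def HasSpecialPattern (P : Set (m → Bool)) (k : ℕ) : Prop :=
  ∃ X Y, IsPattern P k X Y ∧ ∀ p, Y p = fun v => !(X p v)

end Patterns

noncomputable section Stmt10Aux

variable {n : ℕ}

/-- Every vertex of a cycle has an in-neighbour on the cycle. -/
lemma cyc_pred {V : Type*} {G : V → V → Prop} {l : List V} (h : IsCycle G l)
    {v : V} (hv : v ∈ l) : ∃ u ∈ l, G u v := by
  obtain ⟨hne, -, harcs⟩ := h
  have hlen : 1 ≤ l.length := List.length_pos_iff.mpr hne
  have htake : (l.take 1).length = 1 := by rw [List.length_take]; omega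
  have hLlen : (l ++ l.take 1).length = l.length + 1 := by
    rw [List.length_append, htake]
  have hzlen : (CycArcs l).length = l.length := by
    rw [CycArcs, List.length_zip, List.length_tail, hLlen]
    omega
  have hget : ∀ (i : ℕ) (hi : i < l.length),
      G ((l ++ l.take 1)[i]'(by omega)) ((l ++ l.take 1)[i+1]'(by omega)) := by
    intro i hi
    have hmem : (CycArcs l)[i]'(by omega) ∈ CycArcs l := List.getElem_mem _
    have heq : (CycArcs l)[i]'(by omega)
        = ((l ++ l.take 1)[i]'(by omega), ((l ++ l.take 1).tail)[i]'(by
            rw [List.length_tail, hLlen]; omega)) := List.getElem_zip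
    have htail : ((l ++ l.take 1).tail)[i]'(by rw [List.length_tail, hLlen]; omega)
        = (l ++ l.take 1)[i+1]'(by omega) := List.getElem_tail _
    have := harcs _ hmem
    rw [heq] at this
    rw [htail] at this
    exact this
  obtain ⟨i, hi, hiv⟩ := List.mem_iff_getElem.mp hv
  rcases Nat.eq_zero_or_pos i with h0 | hpos
  · -- v is the head; its predecessor is the last vertex
    have hg := hget (l.length - 1) (by omega)
    have h1 : (l ++ l.take 1)[l.length - 1]'(by omega) = l[l.length - 1]'(by omega) :=
      List.getElem_append_left (by omega)
    have h2 : (l ++ l.take 1)[(l.length - 1) + 1]'(by omega)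
        = (l.take 1)[(l.length - 1) + 1 - l.length]'(by omega) :=
      List.getElem_append_right (by omega)
    have h3 : (l.take 1)[(l.length - 1) + 1 - l.length]'(by omega) = l[0]'(by omega) := by
      have : (l.length - 1) + 1 - l.length = 0 := by omega
      simp only [this]
      exact List.getElem_take
    refine ⟨l[l.length - 1]'(by omega), List.getElem_mem _, ?_⟩
    rw [h1, h2, h3] at hg
    subst h0
    rw [hiv] at hg
    exact hg
  · obtain ⟨j, rfl⟩ : ∃ j, i = j + 1 := ⟨i - 1, by omega⟩
    have hg := hget j (by omega)
    have h1 : (l ++ l.take 1)[j]'(by omega) = l[j]'(by omega) :=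
      List.getElem_append_left (by omega)
    have h2 : (l ++ l.take 1)[j+1]'(by omega) = l[j+1]'(by omega) :=
      List.getElem_append_left (by omega)
    refine ⟨l[j]'(by omega), List.getElem_mem _, ?_⟩
    rw [h1, h2, hiv] at hg
    exact hg

lemma length_le_flatten_length {α : Type*} :
    ∀ (L : List (List α)), (∀ l ∈ L, l ≠ []) → L.length ≤ L.flatten.length := by
  intro L
  induction L with
  | nil => simp
  | cons a t ih =>
      intro h
      have ha : a ≠ [] := h a (by simp)
      have h1 : 1 ≤ a.length := List.length_pos_iff.mpr ha
      have := ih (fun l hl => h l (by simp [hl]))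
      simp only [List.flatten_cons, List.length_cons, List.length_append]
      omega

lemma packing_length_le {G : Fin n → Fin n → Prop} {P : List (List (Fin n))}
    (h : IsPacking G P) : P.length ≤ n := by
  obtain ⟨hc, hp⟩ := h
  have hnd : P.flatten.Nodup := by
    rw [List.nodup_flatten]
    exact ⟨fun l hl => (hc l hl).2.1, hp.imp (fun {a b} hab => fun x hx hx' => hab x hx hx')⟩
  have h1 : P.length ≤ P.flatten.length :=
    length_le_flatten_length P (fun l hl => (hc l hl).1)
  have h2 : P.flatten.length ≤ n := by
    have := hnd.length_le_card
    simpa using this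
  omega

lemma nu_spec (G : Fin n → Fin n → Prop) :
    ∃ P, IsPacking G P ∧ P.length = nu G := by
  have hne : {k | ∃ P : List (List (Fin n)), IsPacking G P ∧ P.length = k}.Nonempty :=
    ⟨0, [], ⟨fun l hl => absurd hl List.not_mem_nil, List.Pairwise.nil⟩, rfl⟩
  have hbdd : BddAbove {k | ∃ P : List (List (Fin n)), IsPacking G P ∧ P.length = k} :=
    ⟨n, fun k ⟨P, hP, hk⟩ => hk ▸ packing_length_le hP⟩
  exact Nat.sSup_mem hne hbdd

/-- Index (plus one) of the cycle of the packing containing `v`, or `P.length + 1`. -/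
noncomputable def cycVal (P : List (List (Fin n))) (v : Fin n) : ℕ :=
  if h : ∃ j : Fin P.length, v ∈ P.get j then (Classical.choose h).1 + 1 else P.length + 1

lemma packing_get_unique {G : Fin n → Fin n → Prop} {P : List (List (Fin n))}
    (hP : IsPacking G P) {v : Fin n} {j j' : Fin P.length}
    (h : v ∈ P.get j) (h' : v ∈ P.get j') : j = j' := by
  by_contra hne
  have hpw := List.pairwise_iff_get.mp hP.2
  rcases lt_or_gt_of_ne hne with hlt | hlt
  · exact hpw j j' hlt v h h'
  · exact hpw j' j hlt v h' h

lemma cycVal_eq {G : Fin n → Fin n → Prop} {P : List (List (Fin n))}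
    (hP : IsPacking G P) {v : Fin n} {j : Fin P.length} (h : v ∈ P.get j) :
    cycVal P v = j.1 + 1 := by
  have hex : ∃ j : Fin P.length, v ∈ P.get j := ⟨j, h⟩
  rw [cycVal, dif_pos hex]
  have := packing_get_unique hP (Classical.choose_spec hex) h
  rw [this]

lemma cycVal_of_not {P : List (List (Fin n))} {v : Fin n}
    (h : ¬ ∃ j : Fin P.length, v ∈ P.get j) : cycVal P v = P.length + 1 := dif_neg h

lemma cycVal_le_iff {P : List (List (Fin n))} {v : Fin n} :
    cycVal P v ≤ P.length ↔ ∃ j : Fin P.length, v ∈ P.get j := by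
  constructor
  · intro h
    by_contra hn
    rw [cycVal_of_not hn] at h
    omega
  · intro ⟨j, hj⟩
    rw [cycVal]
    rw [dif_pos ⟨j, hj⟩]
    have := (Classical.choose (⟨j, hj⟩ : ∃ j : Fin P.length, v ∈ P.get j)).2
    omega

/-- Iterated level assignment. -/
noncomputable def mu (G : Fin n → Fin n → Prop) (P : List (List (Fin n))) : ℕ → Fin n → ℕ
  | 0 => cycVal P
  | m+1 => fun v =>
      if mu G P m v ≤ P.length then mu G P m v
      else if h : ∃ u, G u v ∧ mu G P m u ≤ P.length then mu G P m h.choose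
      else P.length + 1

lemma mu_succ_of_le {G : Fin n → Fin n → Prop} {P : List (List (Fin n))} {m : ℕ} {v : Fin n}
    (h : mu G P m v ≤ P.length) : mu G P (m+1) v = mu G P m v := by
  simp [mu, h]

lemma mu_of_le {G : Fin n → Fin n → Prop} {P : List (List (Fin n))} {m m' : ℕ} {v : Fin n}
    (hm : m ≤ m') (h : mu G P m v ≤ P.length) : mu G P m' v = mu G P m v := by
  induction m', hm using Nat.le_induction with
  | base => rfl
  | succ m' hm ih => rw [mu_succ_of_le (by rw [ih]; exact h), ih]

/-- The level of a vertex. -/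
noncomputable def lam (G : Fin n → Fin n → Prop) (P : List (List (Fin n))) (v : Fin n) : ℕ :=
  if h : ∃ m, mu G P m v ≤ P.length then mu G P (Nat.find h) v else P.length + 1

lemma lam_eq {G : Fin n → Fin n → Prop} {P : List (List (Fin n))} {m : ℕ} {v : Fin n}
    (h : mu G P m v ≤ P.length) : lam G P v = mu G P m v := by
  have hex : ∃ m, mu G P m v ≤ P.length := ⟨m, h⟩
  rw [lam, dif_pos hex]
  exact (mu_of_le (Nat.find_min' hex h) (Nat.find_spec hex)).symm

lemma lam_le {G : Fin n → Fin n → Prop} {P : List (List (Fin n))} {m : ℕ} {v : Fin n}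
    (h : mu G P m v ≤ P.length) : lam G P v ≤ P.length := by
  rw [lam_eq h]; exact h

lemma lam_of_not {G : Fin n → Fin n → Prop} {P : List (List (Fin n))} {v : Fin n}
    (h : ¬ ∃ m, mu G P m v ≤ P.length) : lam G P v = P.length + 1 := dif_neg h

lemma lam_cases {G : Fin n → Fin n → Prop} {P : List (List (Fin n))} (v : Fin n) :
    lam G P v ≤ P.length ∨ lam G P v = P.length + 1 := by
  by_cases h : ∃ m, mu G P m v ≤ P.length
  · exact Or.inl (lam_le h.choose_spec)
  · exact Or.inr (lam_of_not h)

lemma lam_on_cycle {G : Fin n → Fin n → Prop} {P : List (List (Fin n))}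
    (hP : IsPacking G P) {v : Fin n} {j : Fin P.length} (h : v ∈ P.get j) :
    lam G P v = j.1 + 1 := by
  have h0 : mu G P 0 v = j.1 + 1 := cycVal_eq hP h
  have hle : mu G P 0 v ≤ P.length := by rw [h0]; omega
  rw [lam_eq hle, h0]

/-- Every non-source vertex has an in-neighbour of the same level. -/
lemma lam_parent {G : Fin n → Fin n → Prop} {P : List (List (Fin n))}
    (hP : IsPacking G P) {v : Fin n} (hv : ∃ u, G u v) :
    ∃ u, G u v ∧ lam G P u = lam G P v := by
  by_cases hcyc : ∃ j : Fin P.length, v ∈ P.get j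
  · -- v on a cycle: its cycle predecessor has the same level
    obtain ⟨j, hj⟩ := hcyc
    have hC : IsCycle G (P.get j) := hP.1 _ (List.get_mem _ _)
    obtain ⟨u, hu, hGu⟩ := cyc_pred hC hj
    exact ⟨u, hGu, by rw [lam_on_cycle hP hu, lam_on_cycle hP hj]⟩
  by_cases hfin : ∃ m, mu G P m v ≤ P.length
  · -- v reachable from a cycle but not on one
    have hfind := Nat.find_spec hfin
    have hpos : Nat.find hfin ≠ 0 := by
      intro h0
      rw [h0] at hfind
      exact hcyc (cycVal_le_iff.mp hfind)
    obtain ⟨m, hm⟩ : ∃ m, Nat.find hfin = m + 1 := ⟨Nat.find hfin - 1, by omega⟩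
    have hmlt : ¬ mu G P m v ≤ P.length := Nat.find_min hfin (by omega)
    rw [hm] at hfind
    rw [show mu G P (m+1) v = if mu G P m v ≤ P.length then mu G P m v
        else if h : ∃ u, G u v ∧ mu G P m u ≤ P.length then mu G P m h.choose
        else P.length + 1 from rfl, if_neg hmlt] at hfind
    by_cases hex : ∃ u, G u v ∧ mu G P m u ≤ P.length
    · have hsucc : mu G P (m+1) v = mu G P m hex.choose := by
        rw [show mu G P (m+1) v = if mu G P m v ≤ P.length then mu G P m v
            else if h : ∃ u, G u v ∧ mu G P m u ≤ P.length then mu G P m h.choose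
            else P.length + 1 from rfl, if_neg hmlt, dif_pos hex]
      rw [dif_pos hex] at hfind
      obtain ⟨hGu, hmu⟩ := hex.choose_spec
      refine ⟨hex.choose, hGu, ?_⟩
      have hv1 : lam G P v = mu G P (m+1) v := lam_eq (by rw [hsucc]; exact hfind)
      rw [lam_eq hmu, hv1, hsucc]
    · rw [dif_neg hex] at hfind
      omega
  · -- v not reachable: all in-neighbours are unreachable too
    obtain ⟨u, hu⟩ := hv
    refine ⟨u, hu, ?_⟩
    have hu2 : ¬ ∃ m, mu G P m u ≤ P.length := by
      intro ⟨m, hm⟩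
      apply hfin
      refine ⟨m + 1, ?_⟩
      rw [show mu G P (m+1) v = if mu G P m v ≤ P.length then mu G P m v
          else if h : ∃ u, G u v ∧ mu G P m u ≤ P.length then mu G P m h.choose
          else P.length + 1 from rfl]
      by_cases h1 : mu G P m v ≤ P.length
      · rw [if_pos h1]; exact h1
      · rw [if_neg h1, dif_pos ⟨u, hu, hm⟩]
        exact (⟨u, hu, hm⟩ : ∃ u, G u v ∧ mu G P m u ≤ P.length).choose_spec.2
    rw [lam_of_not hfin, lam_of_not hu2]

lemma lam_source {G : Fin n → Fin n → Prop} {P : List (List (Fin n))}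
    (hP : IsPacking G P) {v : Fin n} (hv : ¬ ∃ u, G u v) :
    lam G P v = P.length + 1 := by
  apply lam_of_not
  intro ⟨m, hm⟩
  induction m with
  | zero =>
      obtain ⟨j, hj⟩ := cycVal_le_iff.mp hm
      have hC : IsCycle G (P.get j) := hP.1 _ (List.get_mem _ _)
      obtain ⟨u, -, hGu⟩ := cyc_pred hC hj
      exact hv ⟨u, hGu⟩
  | succ m ih =>
      rw [show mu G P (m+1) v = if mu G P m v ≤ P.length then mu G P m v
          else if h : ∃ u, G u v ∧ mu G P m u ≤ P.length then mu G P m h.choose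
          else P.length + 1 from rfl] at hm
      by_cases h1 : mu G P m v ≤ P.length
      · exact ih h1
      · rw [if_neg h1] at hm
        by_cases h2 : ∃ u, G u v ∧ mu G P m u ≤ P.length
        · exact hv ⟨h2.choose, h2.choose_spec.1⟩
        · rw [dif_neg h2] at hm; omega

lemma lam_level_nonempty {G : Fin n → Fin n → Prop} {P : List (List (Fin n))}
    (hP : IsPacking G P) {i : ℕ} (h1 : 1 ≤ i) (h2 : i ≤ P.length) :
    ∃ v, lam G P v = i := by
  have hj : i - 1 < P.length := by omega
  have hC : IsCycle G (P.get ⟨i-1, hj⟩) := hP.1 _ (List.get_mem _ _)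
  obtain ⟨v, hv⟩ := List.exists_mem_of_ne_nil _ hC.1
  refine ⟨v, ?_⟩
  rw [lam_on_cycle hP hv]
  show i - 1 + 1 = i
  omega

/-- In-neighbourhood. -/
noncomputable def Nbr (G : Fin n → Fin n → Prop) (v : Fin n) : Finset (Fin n) :=
  Finset.univ.filter (fun u => G u v)

lemma mem_Nbr {G : Fin n → Fin n → Prop} {u v : Fin n} : u ∈ Nbr G v ↔ G u v := by
  simp [Nbr]

/-- Threshold of a vertex. -/
noncomputable def thr (G : Fin n → Fin n → Prop) (P : List (List (Fin n))) (v : Fin n) : ℕ :=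
  max 1 ((Nbr G v).filter (fun u => lam G P u ≤ lam G P v)).card

/-- The monotone network: `v` becomes active iff at least `thr v` in-neighbours are active. -/
noncomputable def net (G : Fin n → Fin n → Prop) (P : List (List (Fin n)))
    (x : Fin n → Bool) (v : Fin n) : Bool :=
  decide (thr G P v ≤ ((Nbr G v).filter (fun u => x u = true)).card)

lemma net_mono (G : Fin n → Fin n → Prop) (P : List (List (Fin n))) :
    Monotone (net G P) := by
  intro x y hxy v
  rw [Bool.le_iff_imp, net, net, decide_eq_true_iff, decide_eq_true_iff]
  intro h
  refine le_trans h (Finset.card_le_card ?_)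
  intro u hu
  rw [Finset.mem_filter] at hu ⊢
  exact ⟨hu.1, Bool.le_iff_imp.mp (hxy u) hu.2⟩

lemma thr_pos (G : Fin n → Fin n → Prop) (P : List (List (Fin n))) (v : Fin n) :
    1 ≤ thr G P v := le_max_left _ _

lemma thr_le_card {G : Fin n → Fin n → Prop} {P : List (List (Fin n))} {u v : Fin n}
    (hu : G u v) : thr G P v ≤ (Nbr G v).card := by
  apply max_le
  · exact Finset.card_pos.mpr ⟨u, mem_Nbr.mpr hu⟩
  · exact Finset.card_le_card (Finset.filter_subset _ _)

lemma net_depends (G : Fin n → Fin n → Prop) (P : List (List (Fin n))) :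
    ∀ u v, G u v ↔ Depends (net G P) u v := by
  intro u v
  constructor
  · intro hG
    set t := thr G P v with ht
    have h1 : 1 ≤ t := thr_pos G P v
    have h2 : t ≤ (Nbr G v).card := thr_le_card hG
    have h3 : t - 1 ≤ ((Nbr G v).erase u).card := by
      rw [Finset.card_erase_of_mem (mem_Nbr.mpr hG)]
      omega
    obtain ⟨B, hBsub, hBcard⟩ := Finset.exists_subset_card_eq h3
    have huB : u ∉ B := fun h => Finset.notMem_erase u _ (hBsub h)
    set T := insert u B with hT
    have hTcard : T.card = t := by
      rw [hT, Finset.card_insert_of_notMem huB, hBcard]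
      omega
    refine ⟨fun w => decide (w ∈ B), fun w => decide (w ∈ T), ?_, ?_⟩
    · intro w hw
      have hiff : w ∈ B ↔ w ∈ T := by
        rw [hT, Finset.mem_insert]
        constructor
        · tauto
        · rintro (rfl | h)
          · exact absurd rfl hw
          · exact h
      exact decide_eq_decide.mpr hiff
    · have hBN : ∀ w, w ∈ B → w ∈ Nbr G v := fun w hw =>
        Finset.mem_of_mem_erase (hBsub hw)
      have hTN : ∀ w, w ∈ T → w ∈ Nbr G v := by
        intro w hw
        rw [hT, Finset.mem_insert] at hw
        rcases hw with rfl | hw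
        · exact mem_Nbr.mpr hG
        · exact hBN w hw
      have hfB : (Nbr G v).filter (fun w => (decide (w ∈ B)) = true) = B := by
        ext w
        simp only [Finset.mem_filter, decide_eq_true_iff]
        exact ⟨fun h => h.2, fun h => ⟨hBN w h, h⟩⟩
      have hfT : (Nbr G v).filter (fun w => (decide (w ∈ T)) = true) = T := by
        ext w
        simp only [Finset.mem_filter, decide_eq_true_iff]
        exact ⟨fun h => h.2, fun h => ⟨hTN w h, h⟩⟩
      rw [net, net, hfB, hfT, hBcard, hTcard]
      have hx : ¬ (thr G P v ≤ t - 1) := by omega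
      have hy : thr G P v ≤ t := le_of_eq ht.symm
      rw [decide_eq_false hx, decide_eq_true hy]
      exact Bool.false_ne_true
  · intro hD
    by_contra hG
    obtain ⟨x, y, hagree, hne⟩ := hD
    apply hne
    rw [net, net]
    have hfe : Finset.filter (fun w => x w = true) (Nbr G v)
        = Finset.filter (fun w => y w = true) (Nbr G v) := by
      apply Finset.filter_congr
      intro w hw
      have hwu : w ≠ u := fun h => hG (h ▸ mem_Nbr.mp hw)
      rw [hagree w hwu]
    rw [hfe]

/-- The chain of fixed points. -/
noncomputable def chainPt (G : Fin n → Fin n → Prop) (P : List (List (Fin n)))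
    (j : ℕ) : Fin n → Bool := fun v => decide (lam G P v ≤ j)

lemma chainPt_fixed {G : Fin n → Fin n → Prop} {P : List (List (Fin n))}
    (hP : IsPacking G P) {j : ℕ} (hj : j ≤ P.length) :
    net G P (chainPt G P j) = chainPt G P j := by
  funext v
  by_cases hv : ∃ u, G u v
  · obtain ⟨u₀, hu₀, hlu₀⟩ := lam_parent hP hv
    set E := (Nbr G v).filter (fun u => lam G P u ≤ lam G P v) with hE
    have hu₀E : u₀ ∈ E := by
      rw [hE, Finset.mem_filter]
      exact ⟨mem_Nbr.mpr hu₀, le_of_eq hlu₀⟩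
    have hEpos : 1 ≤ E.card := Finset.card_pos.mpr ⟨u₀, hu₀E⟩
    have hthr : thr G P v = E.card := max_eq_right hEpos
    have hfilter : (Nbr G v).filter (fun u => (chainPt G P j u) = true)
        = (Nbr G v).filter (fun u => lam G P u ≤ j) := by
      apply Finset.filter_congr
      intro w _
      simp [chainPt]
    rw [net, hfilter, hthr, chainPt]
    by_cases hle : lam G P v ≤ j
    · have hsub : E ⊆ (Nbr G v).filter (fun u => lam G P u ≤ j) := by
        intro w hw
        rw [hE, Finset.mem_filter] at hw
        rw [Finset.mem_filter]
        exact ⟨hw.1, le_trans hw.2 hle⟩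
      have := Finset.card_le_card hsub
      exact decide_eq_decide.mpr (iff_of_true this hle)
    · have hsub : (Nbr G v).filter (fun u => lam G P u ≤ j) ⊆ E.erase u₀ := by
        intro w hw
        rw [Finset.mem_filter] at hw
        rw [Finset.mem_erase]
        refine ⟨?_, by rw [hE, Finset.mem_filter]; exact ⟨hw.1, by omega⟩⟩
        intro hwu
        rw [hwu] at hw
        omega
      have hcard := Finset.card_le_card hsub
      rw [Finset.card_erase_of_mem hu₀E] at hcard
      have hlt : ¬ (E.card ≤ ((Nbr G v).filter (fun u => lam G P u ≤ j)).card) := by omega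
      exact decide_eq_decide.mpr (iff_of_false hlt hle)
  · have hNbr : Nbr G v = ∅ := by
      ext w
      simp only [mem_Nbr, Finset.notMem_empty, iff_false]
      exact fun h => hv ⟨w, h⟩
    have hlam : lam G P v = P.length + 1 := lam_source hP hv
    rw [net, chainPt, hNbr]
    simp only [Finset.filter_empty, Finset.card_empty]
    have h1 : ¬ (thr G P v ≤ 0) := by have := thr_pos G P v; omega
    have h2 : ¬ (lam G P v ≤ j) := by omega
    exact decide_eq_decide.mpr (iff_of_false h1 h2)

end Stmt10Aux


/-- every digraph `G` is the interaction graph of a monotone Boolean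
network with at least `ν(G)+1` fixed points. -/
theorem stmt10 {n : ℕ} (G : Fin n → Fin n → Prop) :
    ∃ f : (Fin n → Bool) → Fin n → Bool, Monotone f ∧
      (∀ u v, G u v ↔ Depends f u v) ∧
      nu G + 1 ≤ Set.ncard {x : Fin n → Bool | f x = x} := by
  obtain ⟨P, hP, hlen⟩ := nu_spec G
  refine ⟨net G P, net_mono G P, net_depends G P, ?_⟩
  rw [← hlen]
  set S := {x : Fin n → Bool | net G P x = x} with hS
  set g : Fin (P.length + 1) → (Fin n → Bool) := fun j => chainPt G P j.1 with hg
  have key : ∀ a b : Fin (P.length + 1), a < b → g a ≠ g b := by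
    intro a b hlt hab
    have hb1 : 1 ≤ b.1 := by
      have := Fin.lt_def.mp hlt
      omega
    have hb2 : b.1 ≤ P.length := by omega
    obtain ⟨v, hv⟩ := lam_level_nonempty hP hb1 hb2
    have hfv := congrFun hab v
    rw [hg] at hfv
    simp only [chainPt, hv] at hfv
    rw [decide_eq_decide] at hfv
    have := Fin.lt_def.mp hlt
    omega
  have hginj : Function.Injective g := by
    intro a b hab
    by_contra hne
    rcases lt_or_gt_of_ne hne with hlt | hlt
    · exact key a b hlt hab
    · exact key b a hlt hab.symm
  have hrange : Set.range g ⊆ S := by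
    rintro x ⟨j, rfl⟩
    have hj : j.1 ≤ P.length := by omega
    exact chainPt_fixed hP hj
  have h1 : (Set.range g).ncard = P.length + 1 := by
    rw [← Set.image_univ, Set.ncard_image_of_injective _ hginj, Set.ncard_univ,
      Nat.card_eq_fintype_card, Fintype.card_fin]
  calc P.length + 1 = (Set.range g).ncard := h1.symm
    _ ≤ S.ncard := Set.ncard_le_ncard hrange (Set.toFinite S)
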